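/- arXiv:1703.09323 — 2 statements merged into one kernel-verified Lean document; each statement's English description precedes it below -/
import Mathlib

section
/- Fix n ≥ 1 and t > 0. Suppose Ĵ(λ,k) = g(λ, |λ|(2k+n)) where g ∈ 𝒮(ℝ²) is a Schwartz function. Then Σ_{k∈ℕ} ∫_ℝ |e^{Ĵ(λ,k)t} - 1| |λ|ⁿ dλ < ∞. -/
/-!
Schwartz decay of `g` in its second variable gives `(1 + a|λ|)^(n+2) |g(λ, a|λ|)| ≤ C`
uniformly in `a = 2k + n`, and `|e^{xt} - 1| ≤ |t| e^{|t| sup |g|} |x|`. Hence the `k`-th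
integrand is at most `C' a^(-n) (1 + a²λ²)⁻¹`, whose integral is `C' π a^(-(n+1))`; since
`n ≥ 1` this is summable in `k`.
-/

open MeasureTheory Real

lemma abs_exp_sub_one_le_abs_mul_exp_abs (x : ℝ) : |exp x - 1| ≤ |x| * exp |x| := by
  have h := Complex.norm_exp_sub_sum_le_norm_mul_exp x 1
  simp only [Finset.range_one, Finset.sum_singleton, pow_zero, Nat.factorial_zero, Nat.cast_one,
    div_one, pow_one, Complex.norm_real, Real.norm_eq_abs] at h
  exact_mod_cast h

lemma abs_exp_mul_sub_one_le {x C : ℝ} (hx : |x| ≤ C) (t : ℝ) :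
    |exp (x * t) - 1| ≤ |t| * exp (|t| * C) * |x| :=
  calc |exp (x * t) - 1| ≤ |x * t| * exp |x * t| := abs_exp_sub_one_le_abs_mul_exp_abs _
    _ ≤ |x * t| * exp (|t| * C) := by
        rw [abs_mul, mul_comm |x|]
        gcongr
    _ = |t| * exp (|t| * C) * |x| := by rw [abs_mul]; ring

lemma SchwartzMap.exists_one_add_norm_pow_mul_norm_le {E F : Type*} [NormedAddCommGroup E]
    [NormedSpace ℝ E] [NormedAddCommGroup F] [NormedSpace ℝ F] (f : SchwartzMap E F) (k : ℕ) :
    ∃ C, ∀ x, (1 + ‖x‖) ^ k * ‖f x‖ ≤ C :=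
  ⟨_, fun x => by
    simpa using f.one_add_le_sup_seminorm_apply (𝕜 := ℝ) (m := (k, 0)) le_rfl le_rfl x⟩

lemma SchwartzMap.exists_one_add_mul_abs_pow_mul_abs_exp_sub_one_le (g : SchwartzMap (ℝ × ℝ) ℝ)
    (m : ℕ) (t : ℝ) :
    ∃ M, ∀ a, 0 ≤ a → ∀ x, (1 + a * |x|) ^ m * |exp (g (x, |x| * a) * t) - 1| ≤ M := by
  obtain ⟨C₀, hC₀⟩ := g.exists_one_add_norm_pow_mul_norm_le 0
  obtain ⟨C, hC⟩ := g.exists_one_add_norm_pow_mul_norm_le m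
  simp only [pow_zero, one_mul, Real.norm_eq_abs] at hC₀ hC
  refine ⟨|t| * exp (|t| * C₀) * C, fun a ha x => ?_⟩
  set p : ℝ × ℝ := (x, |x| * a)
  have hp : a * |x| ≤ ‖p‖ := by
    calc a * |x| = ‖p.2‖ := by simp [p, abs_of_nonneg ha, mul_comm]
      _ ≤ ‖p‖ := norm_snd_le p
  calc (1 + a * |x|) ^ m * |exp (g p * t) - 1|
      ≤ (1 + ‖p‖) ^ m * (|t| * exp (|t| * C₀) * |g p|) := by
        gcongr
        exact abs_exp_mul_sub_one_le (hC₀ p) t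
    _ = |t| * exp (|t| * C₀) * ((1 + ‖p‖) ^ m * |g p|) := by ring
    _ ≤ |t| * exp (|t| * C₀) * C := by gcongr; exact hC p

lemma pow_mul_one_add_sq_le_one_add_pow {s : ℝ} (hs : 0 ≤ s) (n : ℕ) :
    s ^ n * (1 + s ^ 2) ≤ (1 + s) ^ (n + 2) := by
  rw [pow_add]
  gcongr
  · linarith
  · nlinarith

lemma integral_inv_one_add_mul_sq {a : ℝ} (ha : 0 < a) :
    ∫ x : ℝ, (1 + (a * x) ^ 2)⁻¹ = π / a := by
  rw [Measure.integral_comp_mul_left (fun y => (1 + y ^ 2)⁻¹) a, integral_univ_inv_one_add_sq,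
    smul_eq_mul, abs_of_pos (inv_pos.2 ha), inv_mul_eq_div]

section DecayIntegral

variable {f : ℝ → ℝ} {a C : ℝ} {n : ℕ}

lemma abs_mul_abs_pow_le_of_decay (ha : 0 < a)
    (hf : ∀ x, (1 + a * |x|) ^ (n + 2) * |f x| ≤ C) (x : ℝ) :
    |f x| * |x| ^ n ≤ C / a ^ n * (1 + (a * x) ^ 2)⁻¹ := by
  set s := a * |x|
  have hs : 0 ≤ s := by positivity
  have hsq : (a * x) ^ 2 = s ^ 2 := by rw [mul_pow, mul_pow, sq_abs]
  rw [hsq, div_mul_eq_mul_div, le_div_iff₀ (by positivity), ← div_eq_mul_inv,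
    le_div_iff₀ (by positivity)]
  calc |f x| * |x| ^ n * a ^ n * (1 + s ^ 2) = s ^ n * (1 + s ^ 2) * |f x| := by ring
    _ ≤ (1 + s) ^ (n + 2) * |f x| := by
        gcongr; exact pow_mul_one_add_sq_le_one_add_pow hs n
    _ ≤ C := hf x

lemma integrable_abs_mul_abs_pow_of_decay (hmeas : AEStronglyMeasurable f) (ha : 0 < a)
    (hf : ∀ x, (1 + a * |x|) ^ (n + 2) * |f x| ≤ C) :
    Integrable fun x => |f x| * |x| ^ n := by
  refine ((integrable_inv_one_add_sq.comp_mul_left' ha.ne').const_mul (C / a ^ n)).mono'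
    (by fun_prop) (ae_of_all _ fun x => ?_)
  rw [Real.norm_eq_abs, abs_of_nonneg (by positivity)]
  exact abs_mul_abs_pow_le_of_decay ha hf x

lemma integral_abs_mul_abs_pow_le_of_decay (hmeas : AEStronglyMeasurable f) (ha : 0 < a)
    (hf : ∀ x, (1 + a * |x|) ^ (n + 2) * |f x| ≤ C) :
    ∫ x, |f x| * |x| ^ n ≤ C * π / a ^ (n + 1) := by
  calc ∫ x, |f x| * |x| ^ n ≤ ∫ x, C / a ^ n * (1 + (a * x) ^ 2)⁻¹ :=
        integral_mono (integrable_abs_mul_abs_pow_of_decay hmeas ha hf)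
          ((integrable_inv_one_add_sq.comp_mul_left' ha.ne').const_mul _)
          (abs_mul_abs_pow_le_of_decay ha hf)
    _ = C * π / a ^ (n + 1) := by
        rw [integral_const_mul, integral_inv_one_add_mul_sq ha]
        field_simp
        ring

end DecayIntegral

lemma summable_inv_two_mul_add_pow_succ {n : ℕ} (hn : 1 ≤ n) :
    Summable fun k : ℕ => ((2 * k + n : ℝ) ^ (n + 1))⁻¹ := by
  have hsq : Summable fun k : ℕ => (((k : ℝ) + 1) ^ 2)⁻¹ := by
    simpa using (summable_nat_add_iff 1).2 (Real.summable_nat_pow_inv.2 one_lt_two)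
  refine hsq.of_nonneg_of_le (fun k => by positivity) fun k => ?_
  have hk : (k : ℝ) + 1 ≤ 2 * k + n := by
    have : (1 : ℝ) ≤ n := by exact_mod_cast hn
    linarith
  gcongr
  calc ((k : ℝ) + 1) ^ 2 ≤ (2 * k + n : ℝ) ^ 2 := by gcongr
    _ ≤ (2 * k + n : ℝ) ^ (n + 1) := pow_le_pow_right₀ (by linarith) (by omega)

theorem exp_Jhat_sub_one_L1_general (n : ℕ) (hn : 1 ≤ n) (t : ℝ)
    (Jhat : ℝ → ℕ → ℝ) (g : SchwartzMap (ℝ × ℝ) ℝ)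
    (hJ : ∀ (lam : ℝ) (k : ℕ), Jhat lam k = g (lam, |lam| * (2 * k + n))) :
    (∀ k : ℕ, Integrable fun lam : ℝ => |Real.exp (Jhat lam k * t) - 1| * |lam| ^ n) ∧
    Summable (fun k : ℕ =>
      ∫ lam : ℝ, |Real.exp (Jhat lam k * t) - 1| * |lam| ^ n) := by
  obtain ⟨M, hM⟩ := g.exists_one_add_mul_abs_pow_mul_abs_exp_sub_one_le (n + 2) t
  have ha (k : ℕ) : (0 : ℝ) < 2 * k + n := by positivity
  have hdecay (k : ℕ) (x : ℝ) :
      (1 + (2 * k + n) * |x|) ^ (n + 2) * |exp (Jhat x k * t) - 1| ≤ M := by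
    rw [hJ]; exact hM _ (ha k).le x
  have hmeas (k : ℕ) : AEStronglyMeasurable fun x => exp (Jhat x k * t) - 1 := by
    simp only [hJ]; fun_prop
  refine ⟨fun k => integrable_abs_mul_abs_pow_of_decay (hmeas k) (ha k) (hdecay k), ?_⟩
  refine ((summable_inv_two_mul_add_pow_succ hn).mul_left (M * π)).of_nonneg_of_le
    (fun k => integral_nonneg fun x => by positivity) fun k => ?_
  simpa [div_eq_mul_inv] using integral_abs_mul_abs_pow_le_of_decay (hmeas k) (ha k) (hdecay k)

/-- If Ĵ(λ,k) = g(λ, |λ|(2k+n)) for a Schwartz function g on ℝ², then for each t > 0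
the function e^{Ĵ(λ,k)t} - 1 belongs to L¹ of the Gelfand spectrum. -/
theorem exp_Jhat_sub_one_L1 (n : ℕ) (hn : 1 ≤ n) (t : ℝ) (ht : 0 < t)
    (Jhat : ℝ → ℕ → ℝ) (g : SchwartzMap (ℝ × ℝ) ℝ)
    (hJ : ∀ (lam : ℝ) (k : ℕ), Jhat lam k = g (lam, |lam| * (2 * k + n))) :
    (∀ k : ℕ, Integrable fun lam : ℝ => |Real.exp (Jhat lam k * t) - 1| * |lam| ^ n) ∧
    Summable (fun k : ℕ =>
      ∫ lam : ℝ, |Real.exp (Jhat lam k * t) - 1| * |lam| ^ n) :=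
  exp_Jhat_sub_one_L1_general n hn t Jhat g hJ
end

section
/- Comparison principle: Let J : ℍₙ → ℝ be continuous, nonnegative, with ∫J = 1. Let u ∈ C(Ω̄ × [0,T]) be a supersolution of the nonlocal Dirichlet problem, i.e. u_t ≥ J∗u - u on Ω × (0,T], u ≥ g ≥ 0 outside Ω, and u(·,·,0) ≥ 0 on Ω. Then u ≥ 0 on Ω̄ × [0,T]. -/
open MeasureTheory

abbrev Heis (n : ℕ) := EuclideanSpace ℂ (Fin n) × ℝ

noncomputable instance (n : ℕ) : MeasurableSpace (EuclideanSpace ℂ (Fin n)) := borel _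
instance (n : ℕ) : BorelSpace (EuclideanSpace ℂ (Fin n)) := ⟨rfl⟩
noncomputable instance (n : ℕ) : MeasureSpace (EuclideanSpace ℂ (Fin n)) := ⟨Measure.addHaar⟩

/-- Heisenberg group operation. -/
noncomputable def hmul {n : ℕ} (a b : Heis n) : Heis n :=
  (a.1 + b.1, a.2 + b.2 + (1 / 2) * (inner ℂ b.1 a.1 : ℂ).im)

/-- Heisenberg group inverse. -/
def hinv {n : ℕ} (a : Heis n) : Heis n := (-a.1, -a.2)

lemma measurePreserving_hshift {n : ℕ} (p : Heis n) :
    MeasurePreserving (fun q : Heis n => hmul q (hinv p)) volume volume := by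
  haveI iH : (volume : Measure (EuclideanSpace ℂ (Fin n))).IsAddRightInvariant := by
    show (Measure.addHaar (G := EuclideanSpace ℂ (Fin n))).IsAddRightInvariant; infer_instance
  haveI iS : SFinite (volume : Measure (EuclideanSpace ℂ (Fin n))) := by
    show SFinite (Measure.addHaar (G := EuclideanSpace ℂ (Fin n))); infer_instance
  have h1 : MeasurePreserving (fun z : EuclideanSpace ℂ (Fin n) => z + (-p.1))
      volume volume := measurePreserving_add_right volume (-p.1)
  have hc : Continuous fun zs : EuclideanSpace ℂ (Fin n) × ℝ =>
      zs.2 + (-p.2 + (1 / 2) * (inner ℂ (-p.1 : EuclideanSpace ℂ (Fin n)) zs.1 : ℂ).im) :=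
    continuous_snd.add (continuous_const.add (continuous_const.mul
      (Complex.continuous_im.comp (Continuous.inner continuous_const continuous_fst))))
  have hgm : Measurable (Function.uncurry fun (z : EuclideanSpace ℂ (Fin n)) (s : ℝ) =>
      s + (-p.2 + (1 / 2) * (inner ℂ (-p.1 : EuclideanSpace ℂ (Fin n)) z : ℂ).im)) :=
    hc.measurable
  have key := h1.skew_product (μc := (volume : Measure ℝ)) (μd := (volume : Measure ℝ)) hgm
    (Filter.Eventually.of_forall fun z => map_add_right_eq_self volume _)
  have heq : (fun q : Heis n => hmul q (hinv p)) =
      (fun q : EuclideanSpace ℂ (Fin n) × ℝ => (q.1 + (-p.1),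
        q.2 + (-p.2 + (1 / 2) * (inner ℂ (-p.1 : EuclideanSpace ℂ (Fin n)) q.1 : ℂ).im))) := by
    funext q
    unfold hmul hinv
    dsimp only
    rw [Prod.mk.injEq]
    exact ⟨rfl, by ring⟩
  rw [heq]
  exact key

lemma deriv_nonpos_of_minOn {f : ℝ → ℝ} {d t₀ T : ℝ} (ht₀ : 0 < t₀) (htT : t₀ ≤ T)
    (hf : HasDerivAt f d t₀) (hmin : ∀ τ ∈ Set.Icc (0:ℝ) T, f t₀ ≤ f τ) : d ≤ 0 := by
  have h : HasDerivWithinAt f d (Set.Ioo 0 t₀) t₀ := hf.hasDerivWithinAt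
  rw [hasDerivWithinAt_iff_tendsto_slope] at h
  have hsub : Set.Ioo (0:ℝ) t₀ \ {t₀} = Set.Ioo 0 t₀ := by
    apply Set.diff_singleton_eq_self
    simp [lt_irrefl]
  rw [hsub] at h
  have hne : (nhdsWithin t₀ (Set.Ioo (0:ℝ) t₀)).NeBot := by
    apply mem_closure_iff_nhdsWithin_neBot.mp
    rw [closure_Ioo ht₀.ne]
    exact Set.right_mem_Icc.mpr ht₀.le
  refine le_of_tendsto h ?_
  filter_upwards [self_mem_nhdsWithin] with τ hτ
  rw [slope_def_field]
  apply div_nonpos_of_nonneg_of_nonpos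
  · exact sub_nonneg.mpr (hmin τ ⟨hτ.1.le, hτ.2.le.trans htT⟩)
  · linarith [hτ.2]

/-- Comparison principle: a continuous supersolution of the nonlocal Dirichlet problem
with nonnegative data is nonnegative on Ω̄ × [0,T]. -/
theorem nonlocal_comparison_principle (n : ℕ)
    (Ω : Set (Heis n)) (hΩmeas : MeasurableSet Ω) (hΩbdd : Bornology.IsBounded Ω)
    (T : ℝ) (hT : 0 < T)
    (J : Heis n → ℝ) (hJcont : Continuous J) (hJpos : ∀ p, 0 ≤ J p)
    (hJ1 : ∫ p : Heis n, J p = 1)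
    (g : Heis n → ℝ → ℝ) (u : Heis n → ℝ → ℝ)
    (hucont : ContinuousOn (fun q : Heis n × ℝ => u q.1 q.2)
      ((closure Ω) ×ˢ Set.Icc (0 : ℝ) T))
    (hsuper : ∀ p ∈ Ω, ∀ t ∈ Set.Ioc (0 : ℝ) T, ∃ d : ℝ,
      HasDerivAt (fun τ : ℝ => u p τ) d t ∧
      (∫ q : Heis n, J (hmul q (hinv p)) * u q t) - u p t ≤ d)
    (hbdry : ∀ p ∉ Ω, ∀ t ∈ Set.Icc (0 : ℝ) T, 0 ≤ g p t ∧ g p t ≤ u p t)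
    (hinit : ∀ p ∈ Ω, 0 ≤ u p 0) :
    ∀ p ∈ closure Ω, ∀ t ∈ Set.Icc (0 : ℝ) T, 0 ≤ u p t := by
  intro p hp t ht
  by_contra hneg
  push_neg at hneg
  have hout : ∀ q ∉ Ω, ∀ s ∈ Set.Icc (0:ℝ) T, 0 ≤ u q s := fun q hq s hs =>
    le_trans (hbdry q hq s hs).1 (hbdry q hq s hs).2
  set K := (closure Ω) ×ˢ Set.Icc (0 : ℝ) T with hKdef
  have hKc : IsCompact K := hΩbdd.isCompact_closure.prod isCompact_Icc
  have hKne : K.Nonempty := ⟨(p, t), Set.mk_mem_prod hp ht⟩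
  set ε : ℝ := -(u p t) / (2 * (T + 1)) with hεdef
  have hεpos : 0 < ε := div_pos (neg_pos.mpr hneg) (by linarith)
  have hvcont : ContinuousOn (fun q : Heis n × ℝ => u q.1 q.2 + ε * q.2) K :=
    hucont.add (continuous_const.mul continuous_snd).continuousOn
  obtain ⟨⟨p₀, t₀⟩, hmemK, hmin⟩ := hKc.exists_isMinOn hKne hvcont
  obtain ⟨hp₀cl, ht₀mem⟩ := hmemK
  have hεmul : ε * (2 * (T + 1)) = -(u p t) := div_mul_cancel₀ _ (by positivity)
  have hεt : ε * t ≤ ε * T := mul_le_mul_of_nonneg_left ht.2 hεpos.le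
  have hvpt : u p t + ε * t < 0 := by nlinarith [mul_pos hεpos hT]
  have hv₀ : u p₀ t₀ + ε * t₀ ≤ u p t + ε * t := hmin (Set.mk_mem_prod hp ht)
  have hneg₀ : u p₀ t₀ + ε * t₀ < 0 := lt_of_le_of_lt hv₀ hvpt
  have ht₀0 : 0 ≤ t₀ := ht₀mem.1
  have hup₀neg : u p₀ t₀ < 0 := by nlinarith [mul_nonneg hεpos.le ht₀0]
  have hp₀Ω : p₀ ∈ Ω := by
    by_contra h
    have := hout p₀ h t₀ ht₀mem
    nlinarith [mul_nonneg hεpos.le ht₀0]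
  have ht₀pos : 0 < t₀ := by
    rcases ht₀0.lt_or_eq with h | h
    · exact h
    · exfalso; have h2 := hinit p₀ hp₀Ω; rw [← h] at hneg₀; nlinarith
  obtain ⟨d, hd, hdle⟩ := hsuper p₀ hp₀Ω t₀ ⟨ht₀pos, ht₀mem.2⟩
  have hdε : d + ε ≤ 0 := by
    apply deriv_nonpos_of_minOn (f := fun τ => u p₀ τ + ε * τ) ht₀pos ht₀mem.2
    · exact hd.add (by simpa using (hasDerivAt_id t₀).const_mul ε)
    · intro τ hτ
      exact hmin (Set.mk_mem_prod hp₀cl hτ)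
  have hlow : ∀ q, u p₀ t₀ ≤ u q t₀ := by
    intro q
    by_cases hq : q ∈ Ω
    · have := hmin (Set.mk_mem_prod (subset_closure hq) ht₀mem)
      simpa using this
    · exact hup₀neg.le.trans (hout q hq t₀ ht₀mem)
  by_cases hInt : Integrable (fun q : Heis n => J (hmul q (hinv p₀)) * u q t₀)
  · have hmp := measurePreserving_hshift (n := n) p₀
    have hJint : Integrable J (volume : Measure (Heis n)) := by
      by_contra h
      rw [integral_undef h] at hJ1
      norm_num at hJ1
    have hJφint : Integrable (fun q : Heis n => J (hmul q (hinv p₀))) volume :=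
      (hmp.integrable_comp hJcont.aestronglyMeasurable).mpr hJint
    have h1 : ∫ q : Heis n, J (hmul q (hinv p₀)) = 1 := by
      have hi := integral_map (μ := (volume : Measure (Heis n)))
        (φ := fun q : Heis n => hmul q (hinv p₀)) hmp.measurable.aemeasurable (f := J)
        (by rw [hmp.map_eq]; exact hJcont.aestronglyMeasurable)
      rw [hmp.map_eq] at hi
      rw [← hi]
      exact hJ1
    have hmono : u p₀ t₀ ≤ ∫ q : Heis n, J (hmul q (hinv p₀)) * u q t₀ := by
      have hle := integral_mono (hJφint.mul_const (u p₀ t₀)) hInt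
        (fun q => mul_le_mul_of_nonneg_left (hlow q) (hJpos _))
      rwa [integral_mul_const, h1, one_mul] at hle
    linarith
  · rw [integral_undef hInt] at hdle
    linarith
end
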